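/- arXiv:2209.13034 — 4 statements merged into one kernel-verified Lean document; each statement's English description precedes it below -/
import Mathlib

section
/- Let G=(V,E) be a hypergraph, let e_0 ∈ E, let T be a finite index set of distinct edges e_k ∈ E \ {e_0} (k ∈ T) adjacent to e_0, and let i ∈ T be such that (e_0 ∩ e_i) \ ∪_{j∈T\{i}} (e_0 ∩ e_j) = ∅. If a point z ∈ ℝ^{V∪E} satisfies z_{e_i} ≤ 1 and the extended flower inequality centered at e_0 with neighbors e_k, k ∈ T \ {i}, then z satisfies the extended flower inequality centered at e_0 with neighbors e_k, k ∈ T. -/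
open Finset

/-- A hypergraph: a finite set of nodes together with a set of edges,
each a subset of the nodes of cardinality at least two. -/
structure FinHypergraph (α : Type*) [DecidableEq α] where
  V : Finset α
  E : Finset (Finset α)
  edge_sub : ∀ e ∈ E, e ⊆ V
  edge_card : ∀ e ∈ E, 2 ≤ e.card

section Defs

variable {α : Type*} [DecidableEq α]

/-- Membership in the multilinear set `S_G`; a point is encoded as a single function
`z : Finset α → ℝ`, with node variables `z {v}` and edge variables `z e`. -/
def MultilinearSet (G : FinHypergraph α) (z : Finset α → ℝ) : Prop :=
  (∀ v ∈ G.V, z {v} = 0 ∨ z {v} = 1) ∧ ∀ e ∈ G.E, z e = ∏ v ∈ e, z {v}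

/-- Membership in the standard linearization `MP^LP_G`. -/
def StdLin (G : FinHypergraph α) (z : Finset α → ℝ) : Prop :=
  (∀ v ∈ G.V, z {v} ≤ 1) ∧
    ∀ e ∈ G.E, 0 ≤ z e ∧ (∑ v ∈ e, z {v}) - (e.card : ℝ) + 1 ≤ z e ∧ ∀ v ∈ e, z e ≤ z {v}

/-- The (extended) flower inequality centered at `e₀` with set of neighbors `T`. -/
def ExtFlowerIneq (z : Finset α → ℝ) (e₀ : Finset α) (T : Finset (Finset α)) : Prop :=
  (∑ v ∈ e₀ \ T.biUnion id, z {v}) + (∑ e ∈ T, z e) - z e₀ ≤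
    ((e₀ \ T.biUnion id).card : ℝ) + (T.card : ℝ) - 1

/-- `T` is a valid set of neighbors for an extended flower inequality centered at `e₀`:
a nonempty set of edges, distinct from `e₀`, adjacent to `e₀`, with `γ_i ≥ 2` for all `i ∈ T`. -/
def ValidEFNeighbors (G : FinHypergraph α) (e₀ : Finset α) (T : Finset (Finset α)) : Prop :=
  T.Nonempty ∧ (∀ e ∈ T, e ∈ G.E ∧ e ≠ e₀ ∧ (e ∩ e₀).Nonempty) ∧
    ∀ i ∈ T, 2 ≤ ((e₀ ∩ i) \ (T.erase i).biUnion (fun j => e₀ ∩ j)).card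

/-- Membership in the extended flower relaxation `MP^EF_G`. -/
def MPEF (G : FinHypergraph α) (z : Finset α → ℝ) : Prop :=
  StdLin G z ∧ ∀ e₀ ∈ G.E, ∀ T : Finset (Finset α), ValidEFNeighbors G e₀ T → ExtFlowerIneq z e₀ T

/-- `T` is a valid set of neighbors for a flower inequality centered at `e₀`. -/
def ValidFlowerNeighbors (G : FinHypergraph α) (e₀ : Finset α) (T : Finset (Finset α)) : Prop :=
  T.Nonempty ∧ (∀ e ∈ T, e ∈ G.E ∧ e ≠ e₀ ∧ 2 ≤ (e₀ ∩ e).card) ∧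
    ∀ i ∈ T, ∀ j ∈ T, i ≠ j → e₀ ∩ i ∩ j = ∅

/-- Membership in the flower relaxation `MP^F_G`. -/
def MPF (G : FinHypergraph α) (z : Finset α → ℝ) : Prop :=
  StdLin G z ∧ ∀ e₀ ∈ G.E, ∀ T : Finset (Finset α), ValidFlowerNeighbors G e₀ T → ExtFlowerIneq z e₀ T

/-- A recursive McCormick relaxation (RMC) of the multilinear set `S_G`:
a set `Ebar` of artificial edges together with, for each `f ∈ E ∪ Ebar`,
a partition `f = J f ∪ K f` into two disjoint nonempty parts, each a singleton
or an element of `E ∪ Ebar`, such that every artificial edge is reachable from some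
edge of `E` by iteratively passing to non-singleton parts. -/
structure RMC {α : Type*} [DecidableEq α] (G : FinHypergraph α) where
  Ebar : Finset (Finset α)
  ebar_sub : ∀ f ∈ Ebar, f ⊆ G.V
  ebar_card : ∀ f ∈ Ebar, 2 ≤ f.card
  ebar_new : ∀ f ∈ Ebar, f ∉ G.E
  J : Finset α → Finset α
  K : Finset α → Finset α
  union_eq : ∀ f ∈ G.E ∪ Ebar, J f ∪ K f = f
  disj : ∀ f ∈ G.E ∪ Ebar, Disjoint (J f) (K f)
  J_ne : ∀ f ∈ G.E ∪ Ebar, (J f).Nonempty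
  K_ne : ∀ f ∈ G.E ∪ Ebar, (K f).Nonempty
  J_mem : ∀ f ∈ G.E ∪ Ebar, (J f).card = 1 ∨ J f ∈ G.E ∪ Ebar
  K_mem : ∀ f ∈ G.E ∪ Ebar, (K f).card = 1 ∨ K f ∈ G.E ∪ Ebar
  reach : ∀ f ∈ Ebar, ∃ e ∈ G.E, Relation.ReflTransGen
    (fun a b => a ∈ G.E ∪ Ebar ∧ 2 ≤ b.card ∧ (b = J a ∨ b = K a)) e f

/-- One step of the recursive decomposition: passing from `a` to a non-singleton part of it. -/
def RMC.step {α : Type*} [DecidableEq α] {G : FinHypergraph α} (M : RMC G) (a b : Finset α) : Prop :=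
  a ∈ G.E ∪ M.Ebar ∧ 2 ≤ b.card ∧ (b = M.J a ∨ b = M.K a)

/-- The recursive sequence `R_e` of `e`: all sets obtained from `e` by iteratively
passing to non-singleton parts of the partitions (with `e ∈ R_e`). -/
def RMC.Rseq {α : Type*} [DecidableEq α] {G : FinHypergraph α} (M : RMC G) (e : Finset α) :
    Set (Finset α) :=
  {f | Relation.ReflTransGen M.step e f}

/-- The RMC is non-overlapping if the recursive sequences of distinct edges are disjoint. -/
def RMC.NonOverlapping {α : Type*} [DecidableEq α] {G : FinHypergraph α} (M : RMC G) : Prop :=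
  ∀ e ∈ G.E, ∀ e' ∈ G.E, e ≠ e' → M.Rseq e ∩ M.Rseq e' = ∅

/-- The point `w` (including artificial coordinates) satisfies all McCormick
inequalities of the RMC. -/
def RMC.McCormick {α : Type*} [DecidableEq α] {G : FinHypergraph α} (M : RMC G)
    (w : Finset α → ℝ) : Prop :=
  ∀ f ∈ G.E ∪ M.Ebar,
    0 ≤ w f ∧ w (M.J f) + w (M.K f) - 1 ≤ w f ∧ w f ≤ w (M.J f) ∧ w f ≤ w (M.K f)

/-- Membership in `MP^RMC_G`, the projection of the RMC polytope onto the coordinates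
indexed by `V ∪ E`: the point `z` admits an extension to the artificial variables
satisfying all McCormick inequalities of the RMC. -/
def RMC.MPRMC {α : Type*} [DecidableEq α] {G : FinHypergraph α} (M : RMC G)
    (z : Finset α → ℝ) : Prop :=
  ∃ w : Finset α → ℝ, (∀ v ∈ G.V, w {v} = z {v}) ∧ (∀ e ∈ G.E, w e = z e) ∧ M.McCormick w

/-- A flower partition `Te` of the edge `e`: a partition of `e` into pairwise disjoint
nonempty parts, each a singleton subset of `e` or an element of `R_e`, such that every
part lying in `Ebar` belongs to the recursive sequence of some other original edge. -/
def RMC.FlowerPartition {α : Type*} [DecidableEq α] {G : FinHypergraph α} (M : RMC G)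
    (e : Finset α) (Te : Finset (Finset α)) : Prop :=
  (∀ p ∈ Te, p.Nonempty) ∧
  (∀ p ∈ Te, ∀ q ∈ Te, p ≠ q → Disjoint p q) ∧
  Te.biUnion id = e ∧
  (∀ p ∈ Te, (p.card = 1 ∧ p ⊆ e) ∨ p ∈ M.Rseq e) ∧
  ∀ p ∈ Te, p ∈ M.Ebar → ∃ e' ∈ G.E, e' ≠ e ∧ p ∈ M.Rseq e'

/-- The McCormick system for the bilinear equation `w = u * v` over the unit hypercube. -/
def McSys (u v w : ℝ) : Prop := 0 ≤ w ∧ u + v - 1 ≤ w ∧ w ≤ u ∧ w ≤ v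

end Defs

theorem Finset.sdiff_biUnion_erase {α ι : Type*} [DecidableEq α] [DecidableEq ι]
    {s : Finset α} {T : Finset ι} {f : ι → Finset α} {i : ι} (hi : i ∈ T)
    (hcover : s ∩ f i ⊆ (T.erase i).biUnion f) :
    s \ T.biUnion f = s \ (T.erase i).biUnion f := by
  have hsplit : T.biUnion f = f i ∪ (T.erase i).biUnion f := by
    rw [← biUnion_insert, insert_erase hi]
  rw [hsplit, sdiff_union_distrib, inter_eq_right]
  intro v hv
  rw [mem_sdiff] at hv ⊢
  exact ⟨hv.1, fun hvi => hv.2 (hcover (mem_inter.mpr ⟨hv.1, hvi⟩))⟩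

theorem ExtFlowerIneq.of_erase {α : Type*} [DecidableEq α] {z : Finset α → ℝ}
    {e₀ i : Finset α} {T : Finset (Finset α)} (hi : i ∈ T)
    (hcover : e₀ ∩ i ⊆ (T.erase i).biUnion id) (hzi : z i ≤ 1)
    (h : ExtFlowerIneq z e₀ (T.erase i)) : ExtFlowerIneq z e₀ T := by
  unfold ExtFlowerIneq at h ⊢
  have hcard : (T.card : ℝ) = (T.erase i).card + 1 := by
    exact_mod_cast (card_erase_add_one hi).symm
  rw [sdiff_biUnion_erase hi hcover, ← add_sum_erase T z hi, hcard]
  linarith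

theorem extended_flower_gamma_zero_general {α : Type*} [DecidableEq α]
    (e₀ : Finset α)
    (T : Finset (Finset α))
    (i : Finset α) (hi : i ∈ T)
    (hγ : (e₀ ∩ i) \ (T.erase i).biUnion (fun j => e₀ ∩ j) = ∅)
    (z : Finset α → ℝ) (hzi : z i ≤ 1)
    (hEF : ExtFlowerIneq z e₀ (T.erase i)) :
    ExtFlowerIneq z e₀ T := by
  have hcover : e₀ ∩ i ⊆ (T.erase i).biUnion id := by
    rw [sdiff_eq_empty_iff_subset, ← inter_biUnion] at hγ
    exact hγ.trans inter_subset_right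
  exact hEF.of_erase hi hcover hzi

/-- if `γ_i = 0` for some `i ∈ T`, then the extended flower inequality with
neighbors `T` is implied by `z_{e_i} ≤ 1` together with the extended flower inequality with
neighbors `T \ {i}`. -/
theorem extended_flower_gamma_zero {α : Type*} [DecidableEq α]
    (G : FinHypergraph α) (e₀ : Finset α) (he₀ : e₀ ∈ G.E)
    (T : Finset (Finset α))
    (hTE : ∀ e ∈ T, e ∈ G.E ∧ e ≠ e₀)
    (hadj : ∀ e ∈ T, (e ∩ e₀).Nonempty)
    (i : Finset α) (hi : i ∈ T)
    (hγ : (e₀ ∩ i) \ (T.erase i).biUnion (fun j => e₀ ∩ j) = ∅)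
    (z : Finset α → ℝ) (hzi : z i ≤ 1)
    (hEF : ExtFlowerIneq z e₀ (T.erase i)) :
    ExtFlowerIneq z e₀ T :=
  extended_flower_gamma_zero_general e₀ T i hi hγ z hzi hEF
end

section
/- Let G=(V,E) be a hypergraph, let z̄ ∈ [0,1]^{V∪E}, and let e_0 ∈ E. Let E_{e_0} ⊆ E \ {e_0} be a set that, for every f ⊆ e_0 with |f| ≥ 2 such that some edge e ∈ E \ {e_0} satisfies e ∩ e_0 = f, contains exactly one edge e with e ∩ e_0 = f maximizing z̄_e among all such edges. If z̄ violates some extended flower inequality centered at e_0, then z̄ violates some extended flower inequality centered at e_0 all of whose neighbors belong to E_{e_0}. -/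
open Finset

/-! Every quantity in an extended flower inequality except `∑ z_e` depends on the neighbors only
through their traces `e₀ ∩ e`, which are pairwise distinct because each `γ_i ≥ 2`. Replacing
every neighbor by the representative in `Ee₀` with the same trace therefore keeps the
neighbor set valid and changes the inequality only by raising `∑ z_e`, so a violation
persists. -/

section Replacement

variable {α : Type*} [DecidableEq α]

theorem Finset.image_erase_of_injOn {β : Type*} [DecidableEq β] {f : α → β} {s : Finset α}
    (hf : Set.InjOn f s) {a : α} (ha : a ∈ s) :
    (s.image f).erase (f a) = (s.erase a).image f := by
  ext b
  simp only [mem_erase, mem_image]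
  constructor
  · rintro ⟨hne, x, hx, rfl⟩
    exact ⟨x, ⟨fun hxa => hne (hxa ▸ rfl), hx⟩, rfl⟩
  · rintro ⟨x, ⟨hxa, hx⟩, rfl⟩
    exact ⟨fun h => hxa (hf hx ha h), x, hx, rfl⟩

variable {G : FinHypergraph α} {e₀ : Finset α} {T : Finset (Finset α)}
  {ψ : Finset α → Finset α}

theorem ValidEFNeighbors.two_le_card_inter (hT : ValidEFNeighbors G e₀ T) {e : Finset α}
    (he : e ∈ T) : 2 ≤ (e₀ ∩ e).card :=
  (hT.2.2 e he).trans (card_le_card sdiff_subset)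

/-- Neighbors with the same trace on `e₀` would both have `γ = 0`. -/
theorem ValidEFNeighbors.injOn_inter (hT : ValidEFNeighbors G e₀ T) :
    Set.InjOn (e₀ ∩ ·) T := by
  intro i hi j hj (hij : e₀ ∩ i = e₀ ∩ j)
  by_contra hne
  have hγ : (e₀ ∩ i) \ (T.erase i).biUnion (e₀ ∩ ·) = ∅ :=
    sdiff_eq_empty_iff_subset.2 <| hij ▸
      subset_biUnion_of_mem (e₀ ∩ ·) (mem_erase.2 ⟨Ne.symm hne, hj⟩)
  have := hT.2.2 i hi
  simp [hγ] at this

theorem injOn_of_inter_eq (hinj : Set.InjOn (e₀ ∩ ·) T)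
    (hψ : ∀ e ∈ T, e₀ ∩ ψ e = e₀ ∩ e) : Set.InjOn ψ T :=
  fun a ha b hb hab => hinj ha hb (by simp only [← hψ a ha, ← hψ b hb, hab])

theorem sdiff_biUnion_image_of_inter_eq (hψ : ∀ e ∈ T, e₀ ∩ ψ e = e₀ ∩ e) :
    e₀ \ (T.image ψ).biUnion id = e₀ \ T.biUnion id := by
  have htrace : e₀ ∩ (T.image ψ).biUnion id = e₀ ∩ T.biUnion id := by
    simp only [inter_biUnion, image_biUnion, id]
    exact biUnion_congr rfl hψ
  rw [← sdiff_inter_self_left, htrace, sdiff_inter_self_left]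

theorem sdiff_biUnion_erase_image_of_inter_eq (hinj : Set.InjOn ψ T)
    (hψ : ∀ e ∈ T, e₀ ∩ ψ e = e₀ ∩ e) {i : Finset α} (hi : i ∈ T) :
    (e₀ ∩ ψ i) \ ((T.image ψ).erase (ψ i)).biUnion (e₀ ∩ ·) =
      (e₀ ∩ i) \ (T.erase i).biUnion (e₀ ∩ ·) := by
  rw [hψ i hi, image_erase_of_injOn hinj hi, image_biUnion,
    biUnion_congr rfl fun j hj => hψ j (mem_of_mem_erase hj)]

theorem ValidEFNeighbors.image (hT : ValidEFNeighbors G e₀ T)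
    (hψE : ∀ e ∈ T, ψ e ∈ G.E ∧ ψ e ≠ e₀) (hψ : ∀ e ∈ T, e₀ ∩ ψ e = e₀ ∩ e) :
    ValidEFNeighbors G e₀ (T.image ψ) := by
  have hinj := injOn_of_inter_eq hT.injOn_inter hψ
  refine ⟨hT.1.image ψ, forall_mem_image.2 fun e he => ⟨(hψE e he).1, (hψE e he).2, ?_⟩,
    forall_mem_image.2 fun i hi => ?_⟩
  · rw [inter_comm, hψ e he, inter_comm]
    exact (hT.2.1 e he).2.2
  · rw [sdiff_biUnion_erase_image_of_inter_eq hinj hψ hi]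
    exact hT.2.2 i hi

theorem ExtFlowerIneq.of_image {z : Finset α → ℝ} (hinj : Set.InjOn ψ T)
    (hψ : ∀ e ∈ T, e₀ ∩ ψ e = e₀ ∩ e) (hz : ∀ e ∈ T, z e ≤ z (ψ e))
    (h : ExtFlowerIneq z e₀ (T.image ψ)) : ExtFlowerIneq z e₀ T := by
  unfold ExtFlowerIneq at h ⊢
  rw [sdiff_biUnion_image_of_inter_eq hψ, card_image_of_injOn hinj, sum_image hinj] at h
  linarith [sum_le_sum hz]

end Replacement

theorem extended_flower_separation_restriction_general {α : Type*} [DecidableEq α]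
    (G : FinHypergraph α) (z : Finset α → ℝ)
    (e₀ : Finset α)
    (Ee₀ : Finset (Finset α))
    (hsub : ∀ e ∈ Ee₀, e ∈ G.E ∧ e ≠ e₀)
    (hexists : ∀ f : Finset α, f ⊆ e₀ → 2 ≤ f.card →
      (∃ e ∈ G.E, e ≠ e₀ ∧ e ∩ e₀ = f) → ∃ e ∈ Ee₀, e ∩ e₀ = f)
    (hmax : ∀ e ∈ Ee₀, ∀ e' ∈ G.E, e' ≠ e₀ → e' ∩ e₀ = e ∩ e₀ → z e' ≤ z e)
    (hviol : ∃ T : Finset (Finset α), ValidEFNeighbors G e₀ T ∧ ¬ ExtFlowerIneq z e₀ T) :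
    ∃ T : Finset (Finset α), ValidEFNeighbors G e₀ T ∧ T ⊆ Ee₀ ∧
      ¬ ExtFlowerIneq z e₀ T := by
  obtain ⟨T, hT, hviolT⟩ := hviol
  have hrep : ∀ e ∈ T, ∃ e' ∈ Ee₀, e₀ ∩ e' = e₀ ∩ e := fun e he => by
    obtain ⟨e', he', htr⟩ := hexists (e ∩ e₀) inter_subset_right
      (inter_comm e₀ e ▸ hT.two_le_card_inter he) ⟨e, (hT.2.1 e he).1, (hT.2.1 e he).2.1, rfl⟩
    exact ⟨e', he', by rw [inter_comm, htr, inter_comm]⟩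
  choose! ψ hψEe₀ hψ using hrep
  refine ⟨T.image ψ, hT.image (fun e he => hsub _ (hψEe₀ e he)) hψ,
    image_subset_iff.2 hψEe₀, mt (ExtFlowerIneq.of_image ?_ hψ fun e he => ?_) hviolT⟩
  · exact injOn_of_inter_eq hT.injOn_inter hψ
  · refine hmax _ (hψEe₀ e he) e (hT.2.1 e he).1 (hT.2.1 e he).2.1 ?_
    rw [inter_comm, ← hψ e he, inter_comm]

/-- for separation over extended flower inequalities centered at `e₀`, it
suffices to consider neighbors from the set `Ee₀` keeping, for each intersection pattern
`f ⊆ e₀` with `|f| ≥ 2`, only one edge maximizing `z̄_e`. -/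
theorem extended_flower_separation_restriction {α : Type*} [DecidableEq α]
    (G : FinHypergraph α) (z : Finset α → ℝ)
    (hz : (∀ v ∈ G.V, 0 ≤ z {v} ∧ z {v} ≤ 1) ∧ ∀ e ∈ G.E, 0 ≤ z e ∧ z e ≤ 1)
    (e₀ : Finset α) (he₀ : e₀ ∈ G.E)
    (Ee₀ : Finset (Finset α))
    (hsub : ∀ e ∈ Ee₀, e ∈ G.E ∧ e ≠ e₀)
    (hexists : ∀ f : Finset α, f ⊆ e₀ → 2 ≤ f.card →
      (∃ e ∈ G.E, e ≠ e₀ ∧ e ∩ e₀ = f) → ∃ e ∈ Ee₀, e ∩ e₀ = f)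
    (huniq : ∀ e ∈ Ee₀, ∀ e' ∈ Ee₀, e ∩ e₀ = e' ∩ e₀ → e = e')
    (hmax : ∀ e ∈ Ee₀, ∀ e' ∈ G.E, e' ≠ e₀ → e' ∩ e₀ = e ∩ e₀ → z e' ≤ z e)
    (hviol : ∃ T : Finset (Finset α), ValidEFNeighbors G e₀ T ∧ ¬ ExtFlowerIneq z e₀ T) :
    ∃ T : Finset (Finset α), ValidEFNeighbors G e₀ T ∧ T ⊆ Ee₀ ∧
      ¬ ExtFlowerIneq z e₀ T :=
  extended_flower_separation_restriction_general G z e₀ Ee₀ hsub hexists hmax hviol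
end

section
/- Let G=(V,E) be a hypergraph, let e', e'' be two distinct edges of G, and let ẽ be a set with |ẽ| ≥ 2, ẽ ⊆ e' ∩ e'', and ẽ ≠ e''. Then the inequality ∑_{v ∈ e'' \ ẽ} z_v + z_{e'} − z_{e''} ≤ |e'' \ ẽ| is not valid for the standard linearization MP^LP_G: the point z̃ defined by z̃_v = 1 for v ∈ e'' \ ẽ, z̃_v = 1/2 for v ∈ (e' \ e'') ∪ ẽ, z̃_v = 0 for all remaining nodes, z̃_{e'} = 1/2, z̃_{e''} = 0, z̃_e = 1 for all e ∈ E with e ⊆ e'' \ ẽ, z̃_e = 0 for all e ∈ E with e ⊄ e' ∪ e'', and z̃_e = 1/2 for all remaining edges, belongs to MP^LP_G and violates this inequality. -/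
/-!
On every edge other than `e''` the point `z̃` takes the minimum of its node values, and node
values at most `1` make the minimum satisfy all inequalities of `MP^LP_G` for that edge.
On `e''` the value `0` is feasible because `e''` contains the at least two nodes of `ẽ`,
each of value `1/2`. The inequality fails since `z̃` is `1` on `e'' \ ẽ` while
`z̃_{e'} - z̃_{e''} = 1/2`.
-/

open Finset

theorem sum_le_card_sub_card_add_sum {ι : Type*} [DecidableEq ι] {s t : Finset ι}
    {x : ι → ℝ} (hx : ∀ i ∈ s, x i ≤ 1) (hts : t ⊆ s) :
    ∑ i ∈ s, x i ≤ (#s : ℝ) - #t + ∑ i ∈ t, x i := by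
  have hsdiff : ∑ i ∈ s \ t, x i ≤ #(s \ t) := by
    simpa using sum_le_card_nsmul (s \ t) x 1 fun i hi => hx i (mem_sdiff.1 hi).1
  rw [card_sdiff_of_subset hts, Nat.cast_sub (card_le_card hts)] at hsdiff
  rw [← sum_sdiff hts]
  linarith

theorem stdLin_edge_of_eq_min {ι : Type*} {x : ι → ℝ} {y : ℝ} {e : Finset ι} {v₀ : ι}
    (hle : ∀ v ∈ e, x v ≤ 1) (hv₀ : v₀ ∈ e) (hnonneg : 0 ≤ x v₀)
    (hy : y = x v₀) (hmin : ∀ v ∈ e, x v₀ ≤ x v) :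
    0 ≤ y ∧ (∑ v ∈ e, x v) - (#e : ℝ) + 1 ≤ y ∧ ∀ v ∈ e, y ≤ x v := by
  classical
  have hsum := sum_le_card_sub_card_add_sum hle (singleton_subset_iff.2 hv₀)
  rw [card_singleton, Nat.cast_one, sum_singleton] at hsum
  exact ⟨hy ▸ hnonneg, by linarith, hy ▸ hmin⟩

section

variable {α : Type*} [DecidableEq α]

noncomputable def flowerLikeNode (e' e'' et : Finset α) (v : α) : ℝ :=
  if v ∈ e'' \ et then 1 else if v ∈ (e' \ e'') ∪ et then 1/2 else 0

noncomputable def flowerLikePoint (e' e'' et : Finset α) : Finset α → ℝ := fun s =>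
  if s = e' then 1/2
  else if s = e'' then 0
  else if s.card = 1 then
    (if s ⊆ e'' \ et then 1 else if s ⊆ (e' \ e'') ∪ et then 1/2 else 0)
  else if s ⊆ e'' \ et then 1
  else if s ⊆ e' ∪ e'' then 1/2
  else 0

variable {e' e'' et : Finset α}

theorem flowerLikeNode_le_one (v : α) : flowerLikeNode e' e'' et v ≤ 1 := by
  unfold flowerLikeNode; split_ifs <;> norm_num

theorem flowerLikeNode_nonneg (v : α) : 0 ≤ flowerLikeNode e' e'' et v := by
  unfold flowerLikeNode; split_ifs <;> norm_num

theorem flowerLikeNode_of_mem_sdiff {v : α} (hv : v ∈ e'' \ et) :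
    flowerLikeNode e' e'' et v = 1 := if_pos hv

theorem flowerLikeNode_of_mem_union_of_notMem_sdiff {v : α} (hv : v ∈ e' ∪ e'')
    (hv' : v ∉ e'' \ et) : flowerLikeNode e' e'' et v = 1/2 := by
  rw [flowerLikeNode, if_neg hv', if_pos]
  simp only [mem_union, mem_sdiff, not_and, not_not] at hv hv' ⊢
  tauto

theorem flowerLikeNode_of_mem {v : α} (hv : v ∈ et) : flowerLikeNode e' e'' et v = 1/2 := by
  rw [flowerLikeNode, if_neg fun h => (mem_sdiff.1 h).2 hv, if_pos (mem_union_right _ hv)]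

theorem flowerLikeNode_of_notMem_union {v : α} (hsub : et ⊆ e'') (hv : v ∉ e' ∪ e'') :
    flowerLikeNode e' e'' et v = 0 := by
  simp only [mem_union, not_or] at hv
  have hvt : v ∉ et := fun h => hv.2 (hsub h)
  simp [flowerLikeNode, hv, hvt]

theorem one_half_le_flowerLikeNode {v : α} (hv : v ∈ e' ∪ e'') :
    1/2 ≤ flowerLikeNode e' e'' et v := by
  by_cases hv' : v ∈ e'' \ et
  · rw [flowerLikeNode_of_mem_sdiff hv']; norm_num
  · rw [flowerLikeNode_of_mem_union_of_notMem_sdiff hv hv']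

theorem flowerLikePoint_left : flowerLikePoint e' e'' et e' = 1/2 := if_pos rfl

theorem flowerLikePoint_right (hne : e' ≠ e'') : flowerLikePoint e' e'' et e'' = 0 := by
  simp [flowerLikePoint, hne.symm]

theorem flowerLikePoint_singleton (he' : 2 ≤ #e') (he'' : 2 ≤ #e'') (v : α) :
    flowerLikePoint e' e'' et {v} = flowerLikeNode e' e'' et v := by
  have h' : ({v} : Finset α) ≠ e' := by rintro rfl; simp at he'
  have h'' : ({v} : Finset α) ≠ e'' := by rintro rfl; simp at he''
  simp [flowerLikePoint, flowerLikeNode, h', h'']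

theorem flowerLikePoint_of_two_le_card {e : Finset α} (h' : e ≠ e') (h'' : e ≠ e'')
    (he : 2 ≤ #e) : flowerLikePoint e' e'' et e =
      if e ⊆ e'' \ et then 1 else if e ⊆ e' ∪ e'' then 1/2 else 0 := by
  have hcard : #e ≠ 1 := by omega
  simp [flowerLikePoint, h', h'', hcard]

theorem exists_flowerLikePoint_eq_min (het : et.Nonempty) (hsub : et ⊆ e' ∩ e'')
    {e : Finset α} (he : 2 ≤ #e) (hne : e ≠ e'') :
    ∃ v₀ ∈ e, flowerLikePoint e' e'' et e = flowerLikeNode e' e'' et v₀ ∧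
      ∀ v ∈ e, flowerLikeNode e' e'' et v₀ ≤ flowerLikeNode e' e'' et v := by
  have hsub' : et ⊆ e' := hsub.trans inter_subset_left
  by_cases h' : e = e'
  · subst h'
    obtain ⟨v₀, hv₀⟩ := het
    refine ⟨v₀, hsub' hv₀, by rw [flowerLikePoint_left, flowerLikeNode_of_mem hv₀], ?_⟩
    exact fun v hv => flowerLikeNode_of_mem hv₀ ▸ one_half_le_flowerLikeNode (mem_union_left _ hv)
  rw [flowerLikePoint_of_two_le_card h' hne he]
  by_cases hA : e ⊆ e'' \ et
  · obtain ⟨v₀, hv₀⟩ := card_pos.1 (lt_of_lt_of_le two_pos he)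
    refine ⟨v₀, hv₀, by rw [if_pos hA, flowerLikeNode_of_mem_sdiff (hA hv₀)], fun v hv => ?_⟩
    rw [flowerLikeNode_of_mem_sdiff (hA hv₀), flowerLikeNode_of_mem_sdiff (hA hv)]
  obtain ⟨v₀, hv₀, hv₀A⟩ := not_subset.1 hA
  rw [if_neg hA]
  by_cases hB : e ⊆ e' ∪ e''
  · have hval := flowerLikeNode_of_mem_union_of_notMem_sdiff (hB hv₀) hv₀A
    exact ⟨v₀, hv₀, by rw [if_pos hB, hval],
      fun v hv => hval ▸ one_half_le_flowerLikeNode (hB hv)⟩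
  · obtain ⟨v₁, hv₁, hv₁B⟩ := not_subset.1 hB
    have hval := flowerLikeNode_of_notMem_union (hsub.trans inter_subset_right) hv₁B
    exact ⟨v₁, hv₁, by rw [if_neg hB, hval], fun v _ => hval ▸ flowerLikeNode_nonneg v⟩

theorem stdLin_flowerLikePoint (G : FinHypergraph α) (he' : e' ∈ G.E) (he'' : e'' ∈ G.E)
    (hne : e' ≠ e'') (hcard : 2 ≤ #et) (hsub : et ⊆ e' ∩ e'') :
    StdLin G (flowerLikePoint e' e'' et) := by
  have hnode := flowerLikePoint_singleton (et := et) (G.edge_card e' he') (G.edge_card e'' he'')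
  refine ⟨fun v _ => (hnode v).le.trans (flowerLikeNode_le_one v), fun e he => ?_⟩
  simp only [hnode]
  by_cases h'' : e = e''
  · rw [h'', flowerLikePoint_right hne]
    have hsum := sum_le_card_sub_card_add_sum (x := flowerLikeNode e' e'' et)
      (fun v _ => flowerLikeNode_le_one v) (hsub.trans inter_subset_right)
    rw [sum_congr rfl fun v hv => flowerLikeNode_of_mem hv, sum_const, nsmul_eq_mul] at hsum
    have hcard' : (2 : ℝ) ≤ #et := by exact_mod_cast hcard
    exact ⟨le_rfl, by linarith, fun v _ => flowerLikeNode_nonneg v⟩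
  · have het : et.Nonempty := card_pos.1 (by omega)
    obtain ⟨v₀, hv₀, hz, hmin⟩ := exists_flowerLikePoint_eq_min het hsub (G.edge_card e he) h''
    exact stdLin_edge_of_eq_min (fun v _ => flowerLikeNode_le_one v) hv₀
      (flowerLikeNode_nonneg v₀) hz hmin

theorem flowerLikePoint_violates (he' : 2 ≤ #e') (he'' : 2 ≤ #e'') (hne : e' ≠ e'') :
    ¬ ((∑ v ∈ e'' \ et, flowerLikePoint e' e'' et {v}) + flowerLikePoint e' e'' et e' -
      flowerLikePoint e' e'' et e'' ≤ ((e'' \ et).card : ℝ)) := by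
  have hsum : ∑ v ∈ e'' \ et, flowerLikePoint e' e'' et {v} = #(e'' \ et) := by
    rw [sum_congr rfl fun v hv =>
      (flowerLikePoint_singleton he' he'' v).trans (flowerLikeNode_of_mem_sdiff hv)]
    simp
  rw [hsum, flowerLikePoint_left, flowerLikePoint_right hne]
  norm_num

end

theorem flower_like_ineq_not_valid_for_stdLin_general {α : Type*} [DecidableEq α]
    (G : FinHypergraph α) (e' e'' et : Finset α)
    (he' : e' ∈ G.E) (he'' : e'' ∈ G.E) (hne : e' ≠ e'')
    (hcard : 2 ≤ et.card) (hsub : et ⊆ e' ∩ e'')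
    (zt : Finset α → ℝ)
    (hzt : zt = fun s =>
      if s = e' then 1/2
      else if s = e'' then 0
      else if s.card = 1 then
        (if s ⊆ e'' \ et then 1 else if s ⊆ (e' \ e'') ∪ et then 1/2 else 0)
      else if s ⊆ e'' \ et then 1
      else if s ⊆ e' ∪ e'' then 1/2
      else 0) :
    StdLin G zt ∧
    ¬ ((∑ v ∈ e'' \ et, zt {v}) + zt e' - zt e'' ≤ ((e'' \ et).card : ℝ)) ∧
    ¬ ∀ z : Finset α → ℝ, StdLin G z →
        (∑ v ∈ e'' \ et, z {v}) + z e' - z e'' ≤ ((e'' \ et).card : ℝ) := by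
  change zt = flowerLikePoint e' e'' et at hzt
  subst hzt
  have hstd := stdLin_flowerLikePoint G he' he'' hne hcard hsub
  have hviol := flowerLikePoint_violates (et := et) (G.edge_card e' he') (G.edge_card e'' he'') hne
  exact ⟨hstd, hviol, fun h => hviol (h _ hstd)⟩

/-- the inequality `∑_{v ∈ e''\ẽ} z_v + z_{e'} - z_{e''} ≤ |e''\ẽ|` is not
valid for `MP^LP_G`: the indicated point belongs to `MP^LP_G` and violates it. -/
theorem flower_like_ineq_not_valid_for_stdLin {α : Type*} [DecidableEq α]
    (G : FinHypergraph α) (e' e'' et : Finset α)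
    (he' : e' ∈ G.E) (he'' : e'' ∈ G.E) (hne : e' ≠ e'')
    (hcard : 2 ≤ et.card) (hsub : et ⊆ e' ∩ e'') (hnee : et ≠ e'')
    (zt : Finset α → ℝ)
    (hzt : zt = fun s =>
      if s = e' then 1/2
      else if s = e'' then 0
      else if s.card = 1 then
        (if s ⊆ e'' \ et then 1 else if s ⊆ (e' \ e'') ∪ et then 1/2 else 0)
      else if s ⊆ e'' \ et then 1
      else if s ⊆ e' ∪ e'' then 1/2
      else 0) :
    StdLin G zt ∧
    ¬ ((∑ v ∈ e'' \ et, zt {v}) + zt e' - zt e'' ≤ ((e'' \ et).card : ℝ)) ∧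
    ¬ ∀ z : Finset α → ℝ, StdLin G z →
        (∑ v ∈ e'' \ et, z {v}) + z e' - z e'' ≤ ((e'' \ et).card : ℝ) :=
  flower_like_ineq_not_valid_for_stdLin_general G e' e'' et he' he'' hne hcard hsub zt hzt
end

section
/- Let G=(V,E) be the hypergraph with V = {1,2,3,4} and E = {{1,2,3},{2,3,4},{1,3,4}}. The maximum of −z_{{1,2,3}} + z_{{2,3,4}} + z_{{1,3,4}} over the flower relaxation MP^F_G equals 1, which coincides with the maximum of −x_1x_2x_3 + x_2x_3x_4 + x_1x_3x_4 over x ∈ {0,1}^4. -/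
open Finset

def G15 : FinHypergraph ℕ where
  V := {1,2,3,4}
  E := {{1,2,3},{2,3,4},{1,3,4}}
  edge_sub := by decide
  edge_card := by decide


/-
The value `1` is attained by the binary point `x = (0,1,1,1)`, and every binary point lifts to the
multilinear set, whose points satisfy all flower inequalities. Conversely, the flower inequality
centered at `{1,2,3}` with the single neighbor `{2,3,4}` reads `z₁ + z₂₃₄ - z₁₂₃ ≤ 1`, and the
standard linearization gives `z₁₃₄ ≤ z₁`; adding the two bounds the objective by `1`.
-/

lemma sum_le_card_sub_one_add {ι : Type*} [DecidableEq ι] {s : Finset ι} {f : ι → ℝ}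
    (hf : ∀ j ∈ s, f j ≤ 1) {i : ι} (hi : i ∈ s) : ∑ j ∈ s, f j ≤ s.card - 1 + f i := by
  rw [← add_sum_erase s f hi]
  have hrest : ∑ j ∈ s.erase i, f j ≤ (s.erase i).card • (1 : ℝ) :=
    sum_le_card_nsmul _ _ _ fun j hj => hf j (mem_of_mem_erase hj)
  rw [card_erase_of_mem hi, nsmul_one, Nat.cast_pred (card_pos.mpr ⟨i, hi⟩)] at hrest
  linarith

lemma sum_le_card {ι : Type*} {s : Finset ι} {f : ι → ℝ} (hf : ∀ j ∈ s, f j ≤ 1) :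
    ∑ j ∈ s, f j ≤ s.card := by
  simpa using sum_le_card_nsmul s f 1 hf

section Multilinear

variable {α : Type*} [DecidableEq α] {G : FinHypergraph α} {z : Finset α → ℝ}

def multilinearLift (x : α → ℝ) : Finset α → ℝ := fun s => ∏ v ∈ s, x v

lemma multilinearSet_multilinearLift {x : α → ℝ} (hx : ∀ v ∈ G.V, x v = 0 ∨ x v = 1) :
    MultilinearSet G (multilinearLift x) :=
  ⟨by simpa [multilinearLift] using hx, fun e _ => by simp [multilinearLift]⟩

namespace MultilinearSet

variable (hz : MultilinearSet G z)
include hz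

lemma node_nonneg {v : α} (hv : v ∈ G.V) : 0 ≤ z {v} := by
  rcases hz.1 v hv with h | h <;> simp [h]

lemma node_le_one {v : α} (hv : v ∈ G.V) : z {v} ≤ 1 := by
  rcases hz.1 v hv with h | h <;> simp [h]

lemma edge_nonneg {e : Finset α} (he : e ∈ G.E) : 0 ≤ z e := by
  rw [hz.2 e he]
  exact prod_nonneg fun v hv => hz.node_nonneg (G.edge_sub e he hv)

lemma edge_le_one {e : Finset α} (he : e ∈ G.E) : z e ≤ 1 := by
  rw [hz.2 e he]
  exact prod_le_one (fun v hv => hz.node_nonneg (G.edge_sub e he hv))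
    fun v hv => hz.node_le_one (G.edge_sub e he hv)

lemma edge_le_node {e : Finset α} (he : e ∈ G.E) {v : α} (hv : v ∈ e) : z e ≤ z {v} := by
  have hsub := G.edge_sub e he
  rw [hz.2 e he, ← mul_prod_erase e _ hv]
  exact mul_le_of_le_one_right (hz.node_nonneg (hsub hv)) <| prod_le_one
    (fun w hw => hz.node_nonneg (hsub (mem_of_mem_erase hw)))
    fun w hw => hz.node_le_one (hsub (mem_of_mem_erase hw))

/-- If `z e₀ ≠ 1`, some node `v ∈ e₀` has `z {v} = 0`, and `v` lowers by one either the node sum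
or the term of a neighbor containing it. -/
lemma extFlowerIneq {e₀ : Finset α} (he₀ : e₀ ∈ G.E) {T : Finset (Finset α)} (hT : T ⊆ G.E) :
    ExtFlowerIneq z e₀ T := by
  unfold ExtFlowerIneq
  set S := e₀ \ T.biUnion id
  have hS : ∀ v ∈ S, z {v} ≤ 1 := fun v hv =>
    hz.node_le_one (G.edge_sub e₀ he₀ (sdiff_subset hv))
  have hTle : ∀ e ∈ T, z e ≤ 1 := fun e he => hz.edge_le_one (hT he)
  have hSsum := sum_le_card hS
  have hTsum := sum_le_card hTle
  by_cases hzero : ∃ v ∈ e₀, z {v} = 0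
  · obtain ⟨v, hve₀, hv0⟩ := hzero
    have he₀nonneg := hz.edge_nonneg he₀
    by_cases hvU : v ∈ T.biUnion id
    · obtain ⟨e, heT, hve⟩ := mem_biUnion.mp hvU
      have he0 : z e = 0 := by rw [hz.2 e (hT heT)]; exact prod_eq_zero hve hv0
      have hTsum' := sum_le_card_sub_one_add hTle heT
      linarith
    · have hSsum' := sum_le_card_sub_one_add hS (mem_sdiff.mpr ⟨hve₀, hvU⟩)
      linarith
  · have he₀1 : z e₀ = 1 := by
      rw [hz.2 e₀ he₀]
      exact prod_eq_one fun v hv =>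
        (hz.1 v (G.edge_sub e₀ he₀ hv)).resolve_left fun h => hzero ⟨v, hv, h⟩
    linarith

lemma stdLin : StdLin G z := by
  refine ⟨fun v hv => hz.node_le_one hv,
    fun e he => ⟨hz.edge_nonneg he, ?_, fun v => hz.edge_le_node he⟩⟩
  have hflower := hz.extFlowerIneq he (empty_subset _)
  simp only [ExtFlowerIneq, biUnion_empty, sdiff_empty, sum_empty, card_empty] at hflower
  push_cast at hflower
  linarith

lemma mpf : MPF G z :=
  ⟨hz.stdLin, fun _ he₀ _ hT => hz.extFlowerIneq he₀ fun e he => (hT.2.1 e he).1⟩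

end MultilinearSet

lemma MPF.sum_sdiff_add_le (hz : MPF G z) {e₀ e : Finset α} (he₀ : e₀ ∈ G.E) (he : e ∈ G.E)
    (hne : e ≠ e₀) (hcard : 2 ≤ (e₀ ∩ e).card) :
    ∑ v ∈ e₀ \ e, z {v} + z e - z e₀ ≤ (e₀ \ e).card := by
  have hvalid : ValidFlowerNeighbors G e₀ {e} :=
    ⟨singleton_nonempty e, by simpa using ⟨he, hne, hcard⟩, by simp⟩
  simpa [ExtFlowerIneq] using hz.2 e₀ he₀ {e} hvalid

end Multilinear

/-- the maximum of `-z_{123} + z_{234} + z_{134}` over the flower relaxation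
of the example equals `1`, which coincides with the maximum of
`-x₁x₂x₃ + x₂x₃x₄ + x₁x₃x₄` over `x ∈ {0,1}⁴`. -/
theorem flower_relaxation_example_max :
    IsGreatest {c : ℝ | ∃ z : Finset ℕ → ℝ, MPF G15 z ∧
      c = -z {1,2,3} + z {2,3,4} + z {1,3,4}} 1 ∧
    IsGreatest {c : ℝ | ∃ x : Fin 4 → ℝ, (∀ i, x i = 0 ∨ x i = 1) ∧
      c = -(x 0 * x 1 * x 2) + x 1 * x 2 * x 3 + x 0 * x 2 * x 3} 1 := by
  refine ⟨⟨?_, ?_⟩, ⟨?_, ?_⟩⟩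
  · have hbin := multilinearSet_multilinearLift (G := G15)
      (x := fun v => if v = 1 then 0 else 1) fun v _ => by split_ifs <;> simp
    exact ⟨_, hbin.mpf, by norm_num [multilinearLift]⟩
  · rintro c ⟨z, hz, rfl⟩
    have hflower := hz.sum_sdiff_add_le (e₀ := {1,2,3}) (e := {2,3,4})
      (by decide) (by decide) (by decide) (by decide)
    rw [show ({1,2,3} : Finset ℕ) \ {2,3,4} = {1} by decide] at hflower
    have hedge : z {1,3,4} ≤ z {1} := (hz.1.2 {1,3,4} (by decide)).2.2 1 (by decide)
    simp only [sum_singleton, card_singleton, Nat.cast_one] at hflower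
    linarith
  · exact ⟨![0,1,1,1], fun i => by fin_cases i <;> simp, by simp⟩
  · rintro c ⟨x, hx, rfl⟩
    rcases hx 0 with h0 | h0 <;> rcases hx 1 with h1 | h1 <;>
      rcases hx 2 with h2 | h2 <;> rcases hx 3 with h3 | h3 <;>
      simp only [h0, h1, h2, h3] <;> norm_num
end
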